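/- For the case p = 0: a vector u in the algebraic Fock space satisfies (ε + m)·a(u) = 0 and (m − ε)·a⁺(u) = 0 with u ≠ 0 only if m = ε or m = −ε; if m = ε ≠ 0 then u must be proportional to e₀. -/

import Mathlib

/-- Annihilation operator on the algebraic Fock space: a(eₙ) = √n eₙ₋₁. -/
noncomputable def ann : (ℕ →₀ ℂ) →ₗ[ℂ] (ℕ →₀ ℂ) :=
  Finsupp.lsum ℂ fun n => ((Real.sqrt n : ℝ) : ℂ) • Finsupp.lsingle (n - 1)

/-- Creation operator on the algebraic Fock space: a⁺(eₙ) = √(n+1) eₙ₊₁. -/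
noncomputable def cre : (ℕ →₀ ℂ) →ₗ[ℂ] (ℕ →₀ ℂ) :=
  Finsupp.lsum ℂ fun n => ((Real.sqrt (n + 1) : ℝ) : ℂ) • Finsupp.lsingle (n + 1)

lemma sqrt_succ_ne_zero (n : ℕ) : ((Real.sqrt (n + 1) : ℝ) : ℂ) ≠ 0 := by
  exact_mod_cast (Real.sqrt_pos.mpr n.cast_add_one_pos).ne'

lemma cre_apply_succ (u : ℕ →₀ ℂ) (n : ℕ) :
    cre u (n + 1) = ((Real.sqrt (n + 1) : ℝ) : ℂ) * u n := by
  classical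
  simp only [cre, Finsupp.lsum_apply, Finsupp.sum_apply, LinearMap.smul_apply,
    Finsupp.smul_apply, Finsupp.lsingle_apply, Finsupp.single_apply, smul_eq_mul,
    mul_ite, mul_zero, add_left_inj]
  rw [Finsupp.sum_ite_eq']
  simp +contextual

lemma ann_apply (u : ℕ →₀ ℂ) (n : ℕ) :
    ann u n = ((Real.sqrt (n + 1) : ℝ) : ℂ) * u (n + 1) := by
  classical
  simp only [ann, Finsupp.lsum_apply, Finsupp.sum_apply, LinearMap.smul_apply,
    Finsupp.smul_apply, Finsupp.lsingle_apply, Finsupp.single_apply, smul_eq_mul,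
    mul_ite, mul_zero]
  rw [Finsupp.sum_eq_single (n + 1)]
  · simp
  · rintro (_ | k) _ hk
    · simp
    · simp only [add_tsub_cancel_right, ite_eq_right_iff]
      rintro rfl
      exact absurd rfl hk
  · simp

lemma cre_injective : Function.Injective cre := by
  refine (injective_iff_map_eq_zero cre).mpr fun u hu => ?_
  ext n
  have h := cre_apply_succ u n
  rw [hu] at h
  exact (mul_eq_zero.mp h.symm).resolve_left (sqrt_succ_ne_zero n)

lemma ann_eq_zero_iff (u : ℕ →₀ ℂ) : ann u = 0 ↔ u = u 0 • Finsupp.single 0 1 := by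
  constructor
  · intro hu
    ext (_ | n)
    · simp
    · have h := ann_apply u n
      rw [hu] at h
      simpa using (mul_eq_zero.mp h.symm).resolve_left (sqrt_succ_ne_zero n)
  · intro hu
    ext n
    rw [ann_apply, hu]
    simp

/-- The p = 0 case: (ε+m)·a u = 0 and (m−ε)·a⁺ u = 0 with u ≠ 0 force
m = ε or m = −ε, and if m = ε ≠ 0 then u is proportional to the Fock vacuum e₀. -/
theorem stmt6 (ε m : ℝ) (u : ℕ →₀ ℂ) (hu : u ≠ 0)
    (h1 : ((ε + m : ℝ) : ℂ) • ann u = 0)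
    (h2 : ((m - ε : ℝ) : ℂ) • cre u = 0) :
    (m = ε ∨ m = -ε) ∧
    (m = ε → m ≠ 0 → ∃ c : ℂ, u = c • Finsupp.single 0 1) := by
  have hcre : cre u ≠ 0 := (map_ne_zero_iff cre cre_injective).mpr hu
  have hme : m = ε := by
    have : ((m - ε : ℝ) : ℂ) = 0 := (smul_eq_zero.mp h2).resolve_right hcre
    exact sub_eq_zero.mp (by exact_mod_cast this)
  refine ⟨Or.inl hme, fun _ hm0 => ⟨u 0, (ann_eq_zero_iff u).mp ?_⟩⟩
  have hsum : ((ε + m : ℝ) : ℂ) ≠ 0 := by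
    rw [hme]; exact_mod_cast fun h => hm0 (by linarith)
  exact (smul_eq_zero.mp h1).resolve_left hsum
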